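/- arXiv:2011.01444 — 2 statements merged into one kernel-verified Lean document; each statement's English description precedes it below -/
import Mathlib

section
/- Let σ : V → Finset V → ℝ be a scoring function on a finite node set V, let ε ≥ 0, let v₀ ∈ V, and let Π ⊆ Π' be candidate parent sets for v₀ (with v₀ ∉ Π') such that σ(v₀, Π) + ε ≤ σ(v₀, Π'). Then for every acyclic parent-set assignment Pa with Pa v₀ = Π', the assignment Pa' obtained by replacing the parent set of v₀ with Π is acyclic and satisfies total(Pa') + ε ≤ total(Pa); in particular, total(Pa) ≥ OPT + ε, where OPT is the minimum total score over all acyclic parent-set assignments on V. -/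
/-!
Replacing `Pa v₀ = P'` by the smaller set `P` only deletes edges of the parent graph, so the new
assignment is still irreflexive and acyclic; its total score differs from that of `Pa` only in the
summand of `v₀`, which drops by at least `ε`. Being acyclic, it competes for `OPT`.
-/

open Function Relation

theorem sum_apply_update_add {ι κ M : Type*} [Fintype ι] [DecidableEq ι] [AddCommMonoid M]
    (σ : ι → κ → M) (f : ι → κ) (a : ι) (b : κ) :
    ∑ i, σ i (update f a b i) + σ a (f a) = ∑ i, σ i (f i) + σ a b := by
  simp only [apply_update (fun i => σ i), Finset.sum_update_of_mem (Finset.mem_univ a),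
    Fintype.sum_eq_add_sum_compl a (fun i => σ i (f i)), Finset.compl_eq_univ_sdiff]
  abel

theorem not_transGen_mem_self_of_le {V : Type*} {Q Q' : V → Finset V} (hle : Q ≤ Q')
    (hacyc : ∀ v, ¬ TransGen (fun u w => u ∈ Q' w) v v) (v : V) :
    ¬ TransGen (fun u w => u ∈ Q w) v v :=
  fun hv => hacyc v (TransGen.mono (fun _ w hu => hle w hu) v v hv)

theorem stmt_1_general {V : Type*} [Fintype V] [DecidableEq V]
    (σ : V → Finset V → ℝ) (ε : ℝ)
    (v₀ : V) (P P' : Finset V) (hsub : P ⊆ P')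
    (hscore : σ v₀ P + ε ≤ σ v₀ P')
    (OPT : ℝ)
    (hOPT : IsLeast {x : ℝ | ∃ Q : V → Finset V,
        (∀ v, v ∉ Q v) ∧
        (∀ v, ¬ Relation.TransGen (fun u w => u ∈ Q w) v v) ∧
        (∑ v, σ v (Q v)) = x} OPT)
    (Pa : V → Finset V)
    (hvalid : ∀ v, v ∉ Pa v)
    (hacyc : ∀ v, ¬ Relation.TransGen (fun u w => u ∈ Pa w) v v)
    (hPa : Pa v₀ = P') :
    (∀ v, v ∉ Function.update Pa v₀ P v) ∧
    (∀ v, ¬ Relation.TransGen (fun u w => u ∈ Function.update Pa v₀ P w) v v) ∧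
    (∑ v, σ v (Function.update Pa v₀ P v)) + ε ≤ (∑ v, σ v (Pa v)) ∧
    OPT + ε ≤ ∑ v, σ v (Pa v) := by
  have hle : update Pa v₀ P ≤ Pa := update_le_self_iff.2 (hPa ▸ hsub)
  have hvalid' : ∀ v, v ∉ update Pa v₀ P v := fun v hv => hvalid v (hle v hv)
  have hacyc' := not_transGen_mem_self_of_le hle hacyc
  have hsum : ∑ v, σ v (update Pa v₀ P v) + ε ≤ ∑ v, σ v (Pa v) := by
    have hchange := sum_apply_update_add σ Pa v₀ P
    rw [hPa] at hchange
    linarith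
  exact ⟨hvalid', hacyc', hsum, by linarith [hOPT.2 ⟨_, hvalid', hacyc', rfl⟩]⟩

/-- Pruning rule for a score improvement of at least `ε`:
if `P ⊆ P'`, `v₀ ∉ P'`, and `σ v₀ P + ε ≤ σ v₀ P'`, then any acyclic parent-set
assignment `Pa` with `Pa v₀ = P'` can be improved by replacing the parent set of `v₀`
with `P`, and its total score is at least `OPT + ε`. -/
theorem stmt_1 {V : Type*} [Fintype V] [DecidableEq V]
    (σ : V → Finset V → ℝ) (ε : ℝ) (hε : 0 ≤ ε)
    (v₀ : V) (P P' : Finset V) (hsub : P ⊆ P') (hv₀ : v₀ ∉ P')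
    (hscore : σ v₀ P + ε ≤ σ v₀ P')
    (OPT : ℝ)
    (hOPT : IsLeast {x : ℝ | ∃ Q : V → Finset V,
        (∀ v, v ∉ Q v) ∧
        (∀ v, ¬ Relation.TransGen (fun u w => u ∈ Q w) v v) ∧
        (∑ v, σ v (Q v)) = x} OPT)
    (Pa : V → Finset V)
    (hvalid : ∀ v, v ∉ Pa v)
    (hacyc : ∀ v, ¬ Relation.TransGen (fun u w => u ∈ Pa w) v v)
    (hPa : Pa v₀ = P') :
    (∀ v, v ∉ Function.update Pa v₀ P v) ∧
    (∀ v, ¬ Relation.TransGen (fun u w => u ∈ Function.update Pa v₀ P w) v v) ∧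
    (∑ v, σ v (Function.update Pa v₀ P v)) + ε ≤ (∑ v, σ v (Pa v)) ∧
    OPT + ε ≤ ∑ v, σ v (Pa v) :=
  stmt_1_general σ ε v₀ P P' hsub hscore OPT hOPT Pa hvalid hacyc hPa
end

section
/- Suppose the local score has the BIC form σ(v, Π) = −L(v, Π) + 2^{|Π|}·w, where L(v, Π) ≤ 0 for all v and Π and w ≥ 0. Let ε ≥ 0, let v₀ ∈ V, and let Π ⊂ Π' be candidate parent sets for v₀ such that σ(v₀, Π) − 2^{|Π'|}·w + ε < 0. Then for every candidate parent set Π'' with Π' ⊆ Π'' and v₀ ∉ Π'', one has σ(v₀, Π) + ε < σ(v₀, Π''); consequently, for every acyclic parent-set assignment Pa with Pa v₀ = Π'', replacing the parent set of v₀ by Π yields an acyclic assignment Pa' with total(Pa') + ε < total(Pa), so total(Pa) > OPT + ε. -/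
/-! Since `L ≤ 0`, the BIC score of any parent set is at least its penalty, and penalties grow
with the parent set; so `σ v₀ P''` already exceeds `σ v₀ P + ε` through its penalty alone.
Shrinking a parent set only removes edges, so the modified assignment stays acyclic, and its
total differs from the old one only in the term of `v₀`. -/

open Function Finset

section ParentSets

variable {V : Type*} [DecidableEq V]

lemma mem_of_mem_update_of_subset {Pa : V → Finset V} {v₀ : V} {P : Finset V}
    (hP : P ⊆ Pa v₀) {u v : V} (hu : u ∈ update Pa v₀ P v) : u ∈ Pa v := by
  rcases eq_or_ne v v₀ with rfl | hv
  · exact hP (by simpa using hu)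
  · rwa [update_of_ne hv] at hu

lemma notMem_update_self_of_subset {Pa : V → Finset V} {v₀ : V} {P : Finset V}
    (hP : P ⊆ Pa v₀) (hirr : ∀ v, v ∉ Pa v) (v : V) : v ∉ update Pa v₀ P v :=
  fun hv => hirr v (mem_of_mem_update_of_subset hP hv)

lemma not_transGen_update_of_subset {Pa : V → Finset V} {v₀ : V} {P : Finset V}
    (hP : P ⊆ Pa v₀) (hacyc : ∀ v, ¬ Relation.TransGen (fun u w => u ∈ Pa w) v v) (v : V) :
    ¬ Relation.TransGen (fun u w => u ∈ update Pa v₀ P w) v v :=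
  fun h => hacyc v (Relation.TransGen.mono (fun _ _ => mem_of_mem_update_of_subset hP) v v h)

lemma sum_apply_update_add_s2 [Fintype V] {M : Type*} [AddCommMonoid M]
    (g : V → Finset V → M) (Pa : V → Finset V) (v₀ : V) (P : Finset V) :
    ∑ v, g v (update Pa v₀ P v) + g v₀ (Pa v₀) = ∑ v, g v (Pa v) + g v₀ P := by
  simp_rw [apply_update (fun v => g v) Pa]
  rw [sum_update_of_mem (mem_univ v₀), sdiff_singleton_eq_erase,
    ← add_sum_erase univ (fun v => g v (Pa v)) (mem_univ v₀)]
  abel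

end ParentSets

section BIC

variable {V : Type*} {σ L : V → Finset V → ℝ} {w : ℝ}

lemma penalty_le_bicScore (hBIC : ∀ v (P : Finset V), σ v P = -(L v P) + 2 ^ P.card * w)
    (hL : ∀ v (P : Finset V), L v P ≤ 0) (v : V) (P : Finset V) :
    2 ^ P.card * w ≤ σ v P := by
  linarith [hBIC v P, hL v P]

lemma penalty_mono (hw : 0 ≤ w) {P P' : Finset V} (h : P ⊆ P') :
    (2 : ℝ) ^ P.card * w ≤ 2 ^ P'.card * w :=
  mul_le_mul_of_nonneg_right (pow_le_pow_right₀ one_le_two (card_le_card h)) hw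

end BIC

theorem stmt_2_general {V : Type*} [Fintype V] [DecidableEq V]
    (σ L : V → Finset V → ℝ) (w ε : ℝ)
    (hBIC : ∀ v (P : Finset V), σ v P = -(L v P) + 2 ^ P.card * w)
    (hL : ∀ v (P : Finset V), L v P ≤ 0) (hw : 0 ≤ w)
    (v₀ : V) (P P' : Finset V) (hss : P ⊂ P')
    (hcond : σ v₀ P - 2 ^ P'.card * w + ε < 0)
    (OPT : ℝ)
    (hOPT : IsLeast {x : ℝ | ∃ Q : V → Finset V,
        (∀ v, v ∉ Q v) ∧
        (∀ v, ¬ Relation.TransGen (fun u w => u ∈ Q w) v v) ∧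
        (∑ v, σ v (Q v)) = x} OPT) :
    ∀ P'' : Finset V, P' ⊆ P'' → v₀ ∉ P'' →
      σ v₀ P + ε < σ v₀ P'' ∧
      ∀ Pa : V → Finset V,
        (∀ v, v ∉ Pa v) →
        (∀ v, ¬ Relation.TransGen (fun u w => u ∈ Pa w) v v) →
        Pa v₀ = P'' →
        (∀ v, v ∉ Function.update Pa v₀ P v) ∧
        (∀ v, ¬ Relation.TransGen (fun u w => u ∈ Function.update Pa v₀ P w) v v) ∧
        (∑ v, σ v (Function.update Pa v₀ P v)) + ε < (∑ v, σ v (Pa v)) ∧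
        OPT + ε < ∑ v, σ v (Pa v) := by
  intro P'' hP'P'' _
  have hscore : σ v₀ P + ε < σ v₀ P'' := by
    linarith [penalty_mono hw hP'P'', penalty_le_bicScore hBIC hL v₀ P'']
  refine ⟨hscore, fun Pa hirr hacyc hPa => ?_⟩
  have hP : P ⊆ Pa v₀ := hPa ▸ hss.subset.trans hP'P''
  have hirr' := notMem_update_self_of_subset hP hirr
  have hacyc' := not_transGen_update_of_subset hP hacyc
  have htotal : ∑ v, σ v (update Pa v₀ P v) + ε < ∑ v, σ v (Pa v) := by
    linarith [sum_apply_update_add_s2 σ Pa v₀ P, hPa ▸ hscore]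
  have hOPT_le : OPT ≤ ∑ v, σ v (update Pa v₀ P v) := hOPT.2 ⟨_, hirr', hacyc', rfl⟩
  exact ⟨hirr', hacyc', htotal, by linarith⟩

/-- Pruning rule for the BIC score
`σ v P = -(L v P) + 2^|P| * w` with `L ≤ 0` and `w ≥ 0`: if `P ⊂ P'` and
`σ v₀ P - 2^|P'| * w + ε < 0`, then every superset `P''` of `P'` (with `v₀ ∉ P''`)
satisfies `σ v₀ P + ε < σ v₀ P''`, and hence every acyclic parent-set assignment `Pa`
with `Pa v₀ = P''` can be strictly improved by replacing the parent set of `v₀` by `P`,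
so its total score exceeds `OPT + ε`. -/
theorem stmt_2 {V : Type*} [Fintype V] [DecidableEq V]
    (σ L : V → Finset V → ℝ) (w ε : ℝ)
    (hBIC : ∀ v (P : Finset V), σ v P = -(L v P) + 2 ^ P.card * w)
    (hL : ∀ v (P : Finset V), L v P ≤ 0) (hw : 0 ≤ w) (hε : 0 ≤ ε)
    (v₀ : V) (P P' : Finset V) (hss : P ⊂ P')
    (hcond : σ v₀ P - 2 ^ P'.card * w + ε < 0)
    (OPT : ℝ)
    (hOPT : IsLeast {x : ℝ | ∃ Q : V → Finset V,
        (∀ v, v ∉ Q v) ∧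
        (∀ v, ¬ Relation.TransGen (fun u w => u ∈ Q w) v v) ∧
        (∑ v, σ v (Q v)) = x} OPT) :
    ∀ P'' : Finset V, P' ⊆ P'' → v₀ ∉ P'' →
      σ v₀ P + ε < σ v₀ P'' ∧
      ∀ Pa : V → Finset V,
        (∀ v, v ∉ Pa v) →
        (∀ v, ¬ Relation.TransGen (fun u w => u ∈ Pa w) v v) →
        Pa v₀ = P'' →
        (∀ v, v ∉ Function.update Pa v₀ P v) ∧
        (∀ v, ¬ Relation.TransGen (fun u w => u ∈ Function.update Pa v₀ P w) v v) ∧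
        (∑ v, σ v (Function.update Pa v₀ P v)) + ε < (∑ v, σ v (Pa v)) ∧
        OPT + ε < ∑ v, σ v (Pa v) :=
  stmt_2_general σ L w ε hBIC hL hw v₀ P P' hss hcond OPT hOPT
end
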